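/- arXiv:1803.05164 — 2 statements merged into one kernel-verified Lean document; each statement's English description precedes it below -/
import Mathlib

section
/- The sequence T_n = D(n)·D(n+2) satisfies T_{2n} = T_{2n-1}·T_{n-1} for n ≥ 1, T_{2n+1} = -T_{2n}, with T_0 = 1 and T_1 = -1. -/
/-!
Since `A` vanishes at odd indices, ordering rows and columns by parity makes the Hankel matrix
of `A` block diagonal. With `B m = A (m - 1)`, the indicator of `m + 1` being a power of two,
this gives `D (p + q) = P p * D q` for `p = ⌈n / 2⌉`, `q = ⌊n / 2⌋`, where `P` is the Hankel
determinant of `B`. The same parity splitting of the Hankel matrix of `B` (after taking the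
Schur complement of the corner `B 0 = 1` in odd size) gives `P (2k) = (-1)^k P(k)^2` and
`P (2k + 1) = (-1)^k D(k)^2`. Hence all these determinants are `±1`, `P n = (-1)^⌊n/2⌋`, and
`D (2n) = (-1)^⌊n/2⌋ D n`, `D (2n + 1) = (-1)^⌈n/2⌉ D n`; the recursions for `T` follow.
-/

open Classical in
noncomputable def A (n : ℕ) : ℤ := if ∃ k : ℕ, n + 2 = 2 ^ (k + 1) then 1 else 0

noncomputable def D (n : ℕ) : ℤ :=
  Matrix.det (Matrix.of fun i j : Fin n => A ((i : ℕ) + j))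

noncomputable def T (n : ℕ) : ℤ := D n * D (n + 2)

open Matrix Equiv

theorem Equiv.Perm.sign_sumComm_self (α : Type*) [Fintype α] [DecidableEq α] :
    Perm.sign (sumComm α α) = (-1) ^ Fintype.card α := by
  have h : sumComm α α =
      (boolProdEquivSum α).permCongr (prodCongrLeft fun _ => swap false true) := by
    ext (a | a) <;> rfl
  rw [h, Perm.sign_permCongr, Perm.sign_prodCongrLeft]
  simp

theorem Matrix.det_fromBlocks_zero₂₂ {R n : Type*} [CommRing R] [Fintype n] [DecidableEq n]
    (A B C : Matrix n n R) :
    (fromBlocks A B C 0).det = (-1) ^ Fintype.card n * (B.det * C.det) := by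
  have h : fromBlocks A B C 0 = (fromBlocks C 0 A B).submatrix (sumComm n n) id := by
    ext (i | i) (j | j) <;> rfl
  rw [h, det_permute, det_fromBlocks_zero₁₂, Perm.sign_sumComm_self]
  simp [mul_comm]

noncomputable def finEvenOddEquiv {p q : ℕ} (hqp : q ≤ p) (hpq : p ≤ q + 1) :
    Fin p ⊕ Fin q ≃ Fin (p + q) :=
  Equiv.ofBijective
    (Sum.elim (fun a => ⟨2 * a, by omega⟩) (fun b => ⟨2 * b + 1, by omega⟩))
    ((Fintype.bijective_iff_injective_and_card _).2
      ⟨by rintro (a | a) (b | b) h <;> simp [Fin.ext_iff] at h ⊢ <;> omega, by simp⟩)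

section FinEvenOddEquiv

variable {p q : ℕ} (hqp : q ≤ p) (hpq : p ≤ q + 1)

@[simp]
theorem finEvenOddEquiv_inl (a : Fin p) : (finEvenOddEquiv hqp hpq (.inl a) : ℕ) = 2 * a := rfl

@[simp]
theorem finEvenOddEquiv_inr (b : Fin q) :
    (finEvenOddEquiv hqp hpq (.inr b) : ℕ) = 2 * b + 1 := rfl

end FinEvenOddEquiv

def hankel {R : Type*} (f : ℕ → R) (m n : ℕ) : Matrix (Fin m) (Fin n) R :=
  of fun i j => f (i + j)

section Hankel

variable {R : Type*}

@[simp]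
theorem hankel_apply (f : ℕ → R) {m n : ℕ} (i : Fin m) (j : Fin n) :
    hankel f m n i j = f (i + j) := rfl

theorem hankel_submatrix_finEvenOddEquiv (f : ℕ → R) {p q : ℕ} (hqp : q ≤ p)
    (hpq : p ≤ q + 1) :
    (hankel f (p + q) (p + q)).submatrix (finEvenOddEquiv hqp hpq) (finEvenOddEquiv hqp hpq) =
      fromBlocks (hankel (fun m => f (2 * m)) p p) (hankel (fun m => f (2 * m + 1)) p q)
        (hankel (fun m => f (2 * m + 1)) q p) (hankel (fun m => f (2 * m + 2)) q q) := by
  ext (i | i) (j | j) <;> simp only [submatrix_apply, hankel_apply, finEvenOddEquiv_inl,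
    finEvenOddEquiv_inr, fromBlocks_apply₁₁, fromBlocks_apply₁₂, fromBlocks_apply₂₁,
    fromBlocks_apply₂₂] <;> congr 1 <;> ring

theorem det_hankel_one_add [CommRing R] (f : ℕ → R) (hf : f 0 = 1) (n : ℕ) :
    (hankel f (1 + n) (1 + n)).det =
      (of fun i j : Fin n => f (i + j + 2) - f (i + 1) * f (j + 1)).det := by
  have h : (hankel f (1 + n) (1 + n)).submatrix finSumFinEquiv finSumFinEquiv =
      fromBlocks 1 (of fun (_ : Fin 1) (j : Fin n) => f (j + 1))
        (of fun (i : Fin n) (_ : Fin 1) => f (i + 1)) (of fun i j : Fin n => f (i + j + 2)) := by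
    ext (i | i) (j | j) <;> simp [Fin.fin_one_eq_zero, hf] <;> congr 1 <;> ring
  rw [← det_submatrix_equiv_self finSumFinEquiv, h, det_fromBlocks_one₁₁]
  congr 1
  ext i j
  simp [mul_apply]

end Hankel

open Classical in
noncomputable def B (m : ℕ) : ℤ := if ∃ k : ℕ, m + 1 = 2 ^ k then 1 else 0

theorem B_zero : B 0 = 1 := if_pos ⟨0, rfl⟩

theorem B_two_mul_add_one (m : ℕ) : B (2 * m + 1) = B m := by
  have h : (∃ k, 2 * m + 1 + 1 = 2 ^ k) ↔ ∃ k, m + 1 = 2 ^ k := by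
    constructor
    · rintro ⟨_ | k, hk⟩
      · omega
      · exact ⟨k, by rw [pow_succ] at hk; omega⟩
    · rintro ⟨k, hk⟩
      exact ⟨k + 1, by rw [pow_succ]; omega⟩
  classical exact if_congr h rfl rfl

theorem B_two_mul_add_two (m : ℕ) : B (2 * m + 2) = 0 := by
  refine if_neg ?_
  rintro ⟨_ | k, hk⟩
  · omega
  · rw [pow_succ] at hk; omega

theorem A_eq_B_succ (m : ℕ) : A m = B (m + 1) := by
  have h : (∃ k, m + 2 = 2 ^ (k + 1)) ↔ ∃ k, m + 1 + 1 = 2 ^ k := by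
    constructor
    · rintro ⟨k, hk⟩
      exact ⟨k + 1, hk⟩
    · rintro ⟨_ | k, hk⟩
      · omega
      · exact ⟨k, hk⟩
  classical exact if_congr h rfl rfl

theorem A_two_mul (m : ℕ) : A (2 * m) = B m := by
  rw [A_eq_B_succ, B_two_mul_add_one]

theorem A_two_mul_add_one (m : ℕ) : A (2 * m + 1) = 0 := by
  rw [A_eq_B_succ, B_two_mul_add_two]

theorem A_two_mul_add_two (m : ℕ) : A (2 * m + 2) = A m := by
  rw [A_eq_B_succ, A_eq_B_succ, show 2 * m + 2 + 1 = 2 * (m + 1) + 1 by ring, B_two_mul_add_one]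

noncomputable def P (n : ℕ) : ℤ := (hankel B n n).det

theorem P_zero : P 0 = 1 := det_fin_zero

theorem D_zero : D 0 = 1 := det_fin_zero

theorem D_eq_det_hankel (n : ℕ) : D n = (hankel A n n).det := rfl

theorem D_add {p q : ℕ} (hqp : q ≤ p) (hpq : p ≤ q + 1) : D (p + q) = P p * D q := by
  have hodd : hankel (fun m => A (2 * m + 1)) p q = 0 := by
    ext i j; simp [A_two_mul_add_one]
  rw [D_eq_det_hankel, ← det_submatrix_equiv_self (finEvenOddEquiv hqp hpq),
    hankel_submatrix_finEvenOddEquiv, hodd, det_fromBlocks_zero₁₂]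
  simp only [A_two_mul, A_two_mul_add_two]
  rfl

theorem P_add_self (k : ℕ) : P (k + k) = (-1) ^ k * P k ^ 2 := by
  have heven : hankel (fun m => B (2 * m + 2)) k k = 0 := by
    ext i j; simp [B_two_mul_add_two]
  rw [P, ← det_submatrix_equiv_self (finEvenOddEquiv le_rfl (Nat.le_succ k)),
    hankel_submatrix_finEvenOddEquiv, heven, det_fromBlocks_zero₂₂]
  simp only [B_two_mul_add_one, Fintype.card_fin, P]
  ring

theorem P_one_add_add_self (k : ℕ) : P (1 + (k + k)) = (-1) ^ k * D k ^ 2 := by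
  have h : (of fun i j : Fin (k + k) => B (i + j + 2) - B (i + 1) * B (j + 1)).submatrix
      (finEvenOddEquiv le_rfl (Nat.le_succ k)) (finEvenOddEquiv le_rfl (Nat.le_succ k)) =
      fromBlocks (of fun a b : Fin k => -(B a * B b)) (hankel A k k) (hankel A k k) 0 := by
    ext (i | i) (j | j) <;> simp only [submatrix_apply, of_apply, hankel_apply,
      finEvenOddEquiv_inl, finEvenOddEquiv_inr, fromBlocks_apply₁₁, fromBlocks_apply₁₂,
      fromBlocks_apply₂₁, fromBlocks_apply₂₂, Matrix.zero_apply, ← A_eq_B_succ]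
    · rw [show 2 * (i : ℕ) + 2 * j + 1 = 2 * (i + j) + 1 by ring, A_two_mul_add_one, A_two_mul,
        A_two_mul, zero_sub]
    · rw [show 2 * (i : ℕ) + (2 * j + 1) + 1 = 2 * (i + j) + 2 by ring, A_two_mul_add_two,
        A_two_mul_add_one, mul_zero, sub_zero]
    · rw [show 2 * (i : ℕ) + 1 + 2 * j + 1 = 2 * (i + j) + 2 by ring, A_two_mul_add_two,
        A_two_mul_add_one, zero_mul, sub_zero]
    · rw [show 2 * (i : ℕ) + 1 + (2 * j + 1) + 1 = 2 * (i + j + 1) + 1 by ring,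
        A_two_mul_add_one, A_two_mul_add_one, zero_mul, sub_zero]
  rw [P, det_hankel_one_add B B_zero,
    ← det_submatrix_equiv_self (finEvenOddEquiv le_rfl (Nat.le_succ k)), h,
    det_fromBlocks_zero₂₂]
  simp only [Fintype.card_fin, D_eq_det_hankel]
  ring

theorem P_sq_eq_one_and_D_sq_eq_one (n : ℕ) : P n ^ 2 = 1 ∧ D n ^ 2 = 1 := by
  induction n using Nat.strong_induction_on with
  | _ n ih =>
    have hP : P n ^ 2 = 1 := by
      obtain ⟨k, rfl | rfl⟩ := Nat.even_or_odd' n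
      · rcases k.eq_zero_or_pos with rfl | hk
        · rw [P_zero, one_pow]
        · rw [two_mul, P_add_self]
          simp [← pow_mul, (ih k (by omega)).1]
      · rw [show 2 * k + 1 = 1 + (k + k) by ring, P_one_add_add_self]
        simp [← pow_mul, (ih k (by omega)).2]
    refine ⟨hP, ?_⟩
    rcases n.eq_zero_or_pos with rfl | hn
    · rw [D_zero, one_pow]
    have hPp : P ((n + 1) / 2) ^ 2 = 1 := by
      rcases (show (n + 1) / 2 ≤ n by omega).lt_or_eq with hlt | heq
      · exact (ih _ hlt).1
      · rwa [heq]
    have hsplit : (n + 1) / 2 + n / 2 = n := by omega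
    rw [← hsplit, D_add (by omega) (by omega), mul_pow, hPp, (ih (n / 2) (by omega)).2, one_mul]

theorem P_eq_neg_one_pow (n : ℕ) : P n = (-1) ^ (n / 2) := by
  obtain ⟨k, rfl | rfl⟩ := Nat.even_or_odd' n
  · rw [two_mul, P_add_self, (P_sq_eq_one_and_D_sq_eq_one k).1, mul_one]
    congr 1; omega
  · rw [add_comm, two_mul, P_one_add_add_self, (P_sq_eq_one_and_D_sq_eq_one k).2, mul_one]
    congr 1; omega

theorem D_two_mul (n : ℕ) : D (2 * n) = (-1) ^ (n / 2) * D n := by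
  rw [two_mul, D_add le_rfl (Nat.le_succ n), P_eq_neg_one_pow]

theorem D_two_mul_add_one (n : ℕ) : D (2 * n + 1) = (-1) ^ ((n + 1) / 2) * D n := by
  rw [show 2 * n + 1 = (n + 1) + n by ring, D_add (Nat.le_succ n) le_rfl, P_eq_neg_one_pow]

theorem neg_one_pow_div_two_mul_neg_one_pow_succ_div_two (n : ℕ) :
    (-1 : ℤ) ^ (n / 2) * (-1) ^ ((n + 1) / 2) = (-1) ^ n := by
  rw [← pow_add]; congr 1; omega

theorem T_two_mul (n : ℕ) : T (2 * n) = (-1) ^ n * (D n * D (n + 1)) := by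
  rw [T, show 2 * n + 2 = 2 * (n + 1) by ring, D_two_mul, D_two_mul,
    ← neg_one_pow_div_two_mul_neg_one_pow_succ_div_two n]
  ring

theorem T_two_mul_add_one (n : ℕ) : T (2 * n + 1) = -T (2 * n) := by
  rw [T_two_mul, T, show 2 * n + 1 + 2 = 2 * (n + 1) + 1 by ring, D_two_mul_add_one,
    D_two_mul_add_one, show (n + 1 + 1) / 2 = n / 2 + 1 by omega, pow_succ,
    ← neg_one_pow_div_two_mul_neg_one_pow_succ_div_two n]
  ring

theorem stmt9 :
    T 0 = 1 ∧ T 1 = -1 ∧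
    (∀ n : ℕ, 1 ≤ n → T (2 * n) = T (2 * n - 1) * T (n - 1)) ∧
    (∀ n : ℕ, T (2 * n + 1) = -T (2 * n)) := by
  have hD1 : D 1 = 1 := by simpa [D_zero] using D_two_mul_add_one 0
  have hT0 : T 0 = 1 := by simpa [D_zero, hD1] using T_two_mul 0
  refine ⟨hT0, by simpa [hT0] using T_two_mul_add_one 0, ?_, T_two_mul_add_one⟩
  intro n hn
  obtain ⟨m, rfl⟩ := Nat.exists_eq_add_of_le' hn
  rw [show 2 * (m + 1) - 1 = 2 * m + 1 by omega, Nat.add_sub_cancel, T_two_mul_add_one,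
    T_two_mul, T_two_mul, T, pow_succ]
  linear_combination (-1 : ℤ) ^ m * D (m + 1) * D (m + 2) * (P_sq_eq_one_and_D_sq_eq_one m).2
end

section
/- Let d_n = det(b_{i+j})_{i,j=0}^{n-1}. Then d_n = (-1)^(n choose 2) · x^{2·a(n)}, where a(n) = Σ_{j=0}^{n-1} s₂(j) and s₂(j) is the number of 1's in the binary expansion of j. -/
/-!
Expanding the determinant over permutations, a permutation `τ` contributes only if every
`τ i + i + 1` is a power of two. With `2^K` the least power of two `≥ n`, the only such power
available to a row `i ≥ 2^(K-1)` is `2^K`; this forces `τ` to reverse the block `[2^K - n, n)`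
and to preserve `[0, 2^K - n)`, so by induction exactly one permutation survives. It is an
involution with at most one fixed point (`0`), whence its sign is `(-1)^(n choose 2)`.
If `i + j + 1 = 2^k`, then `j` is the `k`-bit complement of `i`, so the exponent `k` equals
`s₂(i) + s₂(j)`; summing over `i` gives `2 a(n)`.
-/

open Polynomial in
open Classical in
noncomputable def bSeq (n : ℕ) : Polynomial ℤ :=
  if ∃ k : ℕ, n + 1 = 2 ^ k then X ^ (Nat.log 2 (n + 1)) else 0

theorem Nat.digits_two_sum (i : ℕ) :
    (Nat.digits 2 i).sum = i % 2 + (Nat.digits 2 (i / 2)).sum := by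
  rcases Nat.eq_zero_or_pos i with rfl | hi
  · simp
  · rw [Nat.digits_def' one_lt_two hi, List.sum_cons]

theorem digits_two_sum_add_of_add_add_one_eq_two_pow {i j K : ℕ} (h : i + j + 1 = 2 ^ K) :
    (Nat.digits 2 i).sum + (Nat.digits 2 j).sum = K := by
  induction K generalizing i j with
  | zero =>
    obtain ⟨rfl, rfl⟩ : i = 0 ∧ j = 0 := by simp at h; omega
    simp
  | succ K ih =>
    rw [pow_succ] at h
    have := @ih (i / 2) (j / 2) (by omega)
    rw [Nat.digits_two_sum i, Nat.digits_two_sum j]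
    omega

theorem eq_of_two_pow_lt_two_mul_two_pow {a b : ℕ} (hab : 2 ^ a < 2 * 2 ^ b)
    (hba : 2 ^ b < 2 * 2 ^ a) : a = b := by
  rw [← pow_succ'] at hab hba
  have := (Nat.pow_lt_pow_iff_right one_lt_two).1 hab
  have := (Nat.pow_lt_pow_iff_right one_lt_two).1 hba
  omega

theorem Nat.choose_two_mod_two (n : ℕ) : n.choose 2 % 2 = n / 2 % 2 := by
  induction n using Nat.twoStepInduction with
  | zero => rfl
  | one => rfl
  | more n ih _ =>
    have h : (n + 2).choose 2 = n.choose 2 + 2 * n + 1 := by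
      simp only [Nat.choose_succ_succ, Nat.choose_one_right, Nat.choose_zero_right]; ring
    rw [h, Nat.add_div_right n two_pos]
    omega

theorem Equiv.Perm.sign_eq_neg_one_pow_choose_two {α : Type*} [Fintype α] [DecidableEq α]
    {σ : Equiv.Perm α} (hσ : σ ^ 2 = 1) (hfix : ∀ a b, σ a = a → σ b = b → a = b) :
    Equiv.Perm.sign σ = (-1) ^ (Fintype.card α).choose 2 := by
  have hcompl : σ.supportᶜ.card ≤ 1 :=
    Finset.card_le_one.2 fun a ha b hb => hfix a b (by simpa using ha) (by simpa using hb)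
  have hsupp := Finset.card_compl σ.support
  have hle := Finset.card_le_univ σ.support
  have heven := Equiv.Perm.two_dvd_card_support hσ
  rw [Equiv.Perm.sign_of_pow_two_eq_one hσ, Equiv.Perm.card_fixedPoints,
    Equiv.Perm.sum_cycleType, Int.units_pow_eq_pow_mod_two,
    Int.units_pow_eq_pow_mod_two _ (Nat.choose _ _), Nat.choose_two_mod_two]
  congr 2
  omega

def ceilPowTwo (n : ℕ) : ℕ := 2 ^ Nat.clog 2 n

theorem le_ceilPowTwo (n : ℕ) : n ≤ ceilPowTwo n := Nat.le_pow_clog one_lt_two n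

theorem ceilPowTwo_lt_two_mul {n : ℕ} (hn : n ≠ 0) : ceilPowTwo n < 2 * n := by
  rcases (Nat.one_le_iff_ne_zero.2 hn).eq_or_lt with rfl | hn
  · simp [ceilPowTwo]
  · have := Nat.pow_pred_clog_lt_self one_lt_two hn
    have := Nat.clog_pos one_lt_two hn
    rw [ceilPowTwo, ← Nat.succ_pred_eq_of_pos this, pow_succ]
    omega

theorem ceilPowTwo_sub_lt {n : ℕ} (hn : n ≠ 0) : ceilPowTwo n - n < n := by
  have := ceilPowTwo_lt_two_mul hn; omega

def powTwoPartner (n i : ℕ) : ℕ :=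
  if n = 0 then 0
  else if ceilPowTwo n - n ≤ i then ceilPowTwo n - 1 - i
  else powTwoPartner (ceilPowTwo n - n) i
termination_by n
decreasing_by exact ceilPowTwo_sub_lt ‹_›

section powTwoPartner

variable {n i : ℕ}

theorem powTwoPartner_of_le (hn : n ≠ 0) (h : ceilPowTwo n - n ≤ i) :
    powTwoPartner n i = ceilPowTwo n - 1 - i := by
  rw [powTwoPartner, if_neg hn, if_pos h]

theorem powTwoPartner_of_lt (hn : n ≠ 0) (h : i < ceilPowTwo n - n) :
    powTwoPartner n i = powTwoPartner (ceilPowTwo n - n) i := by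
  rw [powTwoPartner, if_neg hn, if_neg h.not_ge]

theorem powTwoPartner_lt (h : i < n) : powTwoPartner n i < n := by
  induction n using Nat.strong_induction_on generalizing i with
  | _ n ih =>
  have hn : n ≠ 0 := by omega
  have := le_ceilPowTwo n
  rcases lt_or_ge i (ceilPowTwo n - n) with hi | hi
  · rw [powTwoPartner_of_lt hn hi]
    exact (ih _ (ceilPowTwo_sub_lt hn) hi).trans (ceilPowTwo_sub_lt hn)
  · rw [powTwoPartner_of_le hn hi]; omega

theorem powTwoPartner_powTwoPartner (h : i < n) : powTwoPartner n (powTwoPartner n i) = i := by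
  induction n using Nat.strong_induction_on generalizing i with
  | _ n ih =>
  have hn : n ≠ 0 := by omega
  have := le_ceilPowTwo n
  rcases lt_or_ge i (ceilPowTwo n - n) with hi | hi
  · rw [powTwoPartner_of_lt hn hi, powTwoPartner_of_lt hn (powTwoPartner_lt hi),
      ih _ (ceilPowTwo_sub_lt hn) hi]
  · rw [powTwoPartner_of_le hn hi, powTwoPartner_of_le hn (by omega)]; omega

theorem exists_add_powTwoPartner_add_one_eq_two_pow (h : i < n) :
    ∃ k, i + powTwoPartner n i + 1 = 2 ^ k := by
  induction n using Nat.strong_induction_on generalizing i with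
  | _ n ih =>
  have hn : n ≠ 0 := by omega
  have := le_ceilPowTwo n
  rcases lt_or_ge i (ceilPowTwo n - n) with hi | hi
  · rw [powTwoPartner_of_lt hn hi]
    exact ih _ (ceilPowTwo_sub_lt hn) hi
  · rw [powTwoPartner_of_le hn hi]
    exact ⟨Nat.clog 2 n, by rw [← ceilPowTwo]; omega⟩

end powTwoPartner

def IsPowTwoMatching (n : ℕ) (g : ℕ → ℕ) : Prop :=
  Set.BijOn g (Set.Iio n) (Set.Iio n) ∧ ∀ i < n, ∃ k, i + g i + 1 = 2 ^ k

namespace IsPowTwoMatching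

variable {n : ℕ} {g : ℕ → ℕ}

theorem add_add_one_eq_ceilPowTwo (hg : IsPowTwoMatching n g) {i : ℕ} (hi : i < n)
    (h : ceilPowTwo n < 2 * (i + g i + 1)) : i + g i + 1 = ceilPowTwo n := by
  obtain ⟨k, hk⟩ := hg.2 i hi
  have hgi : g i < n := hg.1.mapsTo hi
  have := le_ceilPowTwo n
  rw [hk, eq_of_two_pow_lt_two_mul_two_pow (a := k) (b := Nat.clog 2 n)
    (by rw [← ceilPowTwo]; omega) (by rw [← hk]; exact h)]
  rfl

/-- Rows `i` with `2^K < 2 (i + 1)` can only reach `2^K`; the rest of the block is reached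
through its partners among those rows. -/
theorem eq_ceilPowTwo_sub_one_sub (hg : IsPowTwoMatching n g) {i : ℕ} (hi : i < n)
    (h : ceilPowTwo n - n ≤ i) : g i = ceilPowTwo n - 1 - i := by
  have := le_ceilPowTwo n
  rcases lt_or_ge (ceilPowTwo n) (2 * (i + 1)) with hup | hlow
  · have := hg.add_add_one_eq_ceilPowTwo hi (by omega); omega
  · obtain ⟨p, hp, hpi⟩ := hg.1.surjOn (show ceilPowTwo n - 1 - i ∈ Set.Iio n by simp; omega)
    have := hg.add_add_one_eq_ceilPowTwo hp (by omega)
    obtain rfl : p = i := by omega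
    exact hpi

theorem restrict (hg : IsPowTwoMatching n g) (hn : n ≠ 0) :
    IsPowTwoMatching (ceilPowTwo n - n) g := by
  have hlt := ceilPowTwo_sub_lt hn
  have hsub : Set.Iio (ceilPowTwo n - n) ⊆ Set.Iio n := Set.Iio_subset_Iio hlt.le
  have hmaps : Set.MapsTo g (Set.Iio (ceilPowTwo n - n)) (Set.Iio (ceilPowTwo n - n)) := by
    intro i (hi : i < _)
    by_contra hgi
    replace hgi : ceilPowTwo n - n ≤ g i := not_lt.1 hgi
    have hgin : g i < n := hg.1.mapsTo (hsub hi)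
    have := le_ceilPowTwo n
    have hp := hg.eq_ceilPowTwo_sub_one_sub (i := ceilPowTwo n - 1 - g i) (by omega) (by omega)
    have := hg.1.injOn (hsub hi) (show ceilPowTwo n - 1 - g i < n by omega) (by rw [hp]; omega)
    omega
  exact ⟨((Set.finite_Iio _).injOn_iff_bijOn_of_mapsTo hmaps).1 (hg.1.injOn.mono hsub),
    fun i hi => hg.2 i (hi.trans hlt)⟩

theorem eqOn_powTwoPartner (hg : IsPowTwoMatching n g) :
    Set.EqOn g (powTwoPartner n) (Set.Iio n) := by
  induction n using Nat.strong_induction_on generalizing g with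
  | _ n ih =>
  intro i (hi : i < n)
  have hn : n ≠ 0 := by omega
  rcases lt_or_ge i (ceilPowTwo n - n) with hlow | hup
  · rw [powTwoPartner_of_lt hn hlow]
    exact ih _ (ceilPowTwo_sub_lt hn) (hg.restrict hn) hlow
  · rw [powTwoPartner_of_le hn hup, hg.eq_ceilPowTwo_sub_one_sub hi hup]

end IsPowTwoMatching

def powTwoPartnerPerm (n : ℕ) : Equiv.Perm (Fin n) :=
  Function.Involutive.toPerm (fun i => ⟨powTwoPartner n i, powTwoPartner_lt i.2⟩)
    fun i => Fin.ext (powTwoPartner_powTwoPartner i.2)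

@[simp]
theorem powTwoPartnerPerm_apply_val {n : ℕ} (i : Fin n) :
    (powTwoPartnerPerm n i : ℕ) = powTwoPartner n i := rfl

theorem sign_powTwoPartnerPerm (n : ℕ) :
    Equiv.Perm.sign (powTwoPartnerPerm n) = (-1) ^ n.choose 2 := by
  have hfix (i : Fin n) (hi : powTwoPartnerPerm n i = i) : i = ⟨0, i.pos⟩ := by
    obtain ⟨k, hk⟩ := exists_add_powTwoPartner_add_one_eq_two_pow i.2
    rw [← powTwoPartnerPerm_apply_val, hi] at hk
    cases k with
    | zero => ext; simp at hk; omega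
    | succ k => rw [pow_succ] at hk; omega
  refine (Equiv.Perm.sign_eq_neg_one_pow_choose_two ?_ ?_).trans (by rw [Fintype.card_fin])
  · exact Equiv.ext fun i => Fin.ext (powTwoPartner_powTwoPartner i.2)
  · intro a b ha hb
    rw [hfix a ha, hfix b hb]

theorem eq_powTwoPartnerPerm {n : ℕ} {τ : Equiv.Perm (Fin n)}
    (hτ : ∀ i, ∃ k, (τ i : ℕ) + i + 1 = 2 ^ k) : τ = powTwoPartnerPerm n := by
  let g (x : ℕ) : ℕ := if hx : x < n then τ ⟨x, hx⟩ else 0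
  have hg (i : Fin n) : g i = τ i := dif_pos i.2
  have hmaps : Set.MapsTo g (Set.Iio n) (Set.Iio n) := fun x (hx : x < n) => by
    simp only [g, dif_pos hx]; exact (τ _).2
  have hinj : Set.InjOn g (Set.Iio n) := fun x (hx : x < n) y (hy : y < n) hxy => by
    simpa [g, dif_pos hx, dif_pos hy, Fin.val_inj] using hxy
  have hmatch : IsPowTwoMatching n g :=
    ⟨((Set.finite_Iio n).injOn_iff_bijOn_of_mapsTo hmaps).1 hinj, fun x hx => by
      obtain ⟨k, hk⟩ := hτ ⟨x, hx⟩
      exact ⟨k, by rw [← hk, hg ⟨x, hx⟩]; ring⟩⟩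
  ext i
  rw [← hg, hmatch.eqOn_powTwoPartner i.2]
  rfl

section bSeq

open Polynomial

theorem bSeq_of_add_one_eq_two_pow {m k : ℕ} (h : m + 1 = 2 ^ k) : bSeq m = X ^ k := by
  rw [bSeq, if_pos ⟨k, h⟩, h, Nat.log_pow one_lt_two]

theorem exists_add_one_eq_two_pow_of_bSeq_ne_zero {m : ℕ} (h : bSeq m ≠ 0) :
    ∃ k, m + 1 = 2 ^ k := by
  by_contra hm
  exact h (by rw [bSeq, if_neg hm])

theorem prod_bSeq_of_add_add_one_eq_two_pow {n : ℕ} (τ : Equiv.Perm (Fin n))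
    (hτ : ∀ i, ∃ k, (τ i : ℕ) + i + 1 = 2 ^ k) :
    ∏ i, bSeq (τ i + i) = X ^ (2 * ∑ j ∈ Finset.range n, (Nat.digits 2 j).sum) := by
  choose k hk using hτ
  have hdigits (i : Fin n) : k i = (Nat.digits 2 (τ i)).sum + (Nat.digits 2 i).sum :=
    (digits_two_sum_add_of_add_add_one_eq_two_pow (hk i)).symm
  simp only [fun i => bSeq_of_add_one_eq_two_pow (hk i), Finset.prod_pow_eq_pow_sum, hdigits,
    Finset.sum_add_distrib, Equiv.sum_comp τ fun i => (Nat.digits 2 i).sum,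
    Fin.sum_univ_eq_sum_range fun j => (Nat.digits 2 j).sum, two_mul]

end bSeq

open Polynomial in
theorem stmt16 (n : ℕ) :
    Matrix.det (Matrix.of fun i j : Fin n => bSeq ((i : ℕ) + j)) =
      (-1 : Polynomial ℤ) ^ (n.choose 2) *
        X ^ (2 * ∑ j ∈ Finset.range n, (Nat.digits 2 j).sum) := by
  have hσ (i : Fin n) : ∃ k, (powTwoPartnerPerm n i : ℕ) + i + 1 = 2 ^ k := by
    simpa [add_comm (i : ℕ)] using exists_add_powTwoPartner_add_one_eq_two_pow i.2
  rw [Matrix.det_apply', Finset.sum_eq_single (powTwoPartnerPerm n)]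
  · simp only [Matrix.of_apply, prod_bSeq_of_add_add_one_eq_two_pow _ hσ, sign_powTwoPartnerPerm]
    push_cast
    rfl
  · intro τ _ hτ
    rw [mul_eq_zero_of_right]
    by_contra hprod
    exact hτ (eq_powTwoPartnerPerm fun i =>
      exists_add_one_eq_two_pow_of_bSeq_ne_zero (Finset.prod_ne_zero_iff.1 hprod i (by simp)))
  · simp
end
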